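/- arXiv:2404.01747 — 4 statements merged into one kernel-verified Lean document; each statement's English description precedes it below -/
import Mathlib

section
/- Let H be a real inner product space and let L : H → H be linear, self-adjoint and non-negative (i.e. (Lx, x) ≥ 0 for all x). Given φⁿ, φⁿ⁺¹, qⁿ ∈ H, a nonzero Q ∈ H, set E₁ = ‖Q‖², E₂ = (1/2)(Lφⁿ, φⁿ) + ‖qⁿ‖² − (1/2)(Lφⁿ⁺¹, φⁿ⁺¹), assume E₂ ≥ 0, and define λ = min{1, √(E₂/E₁)} and qⁿ⁺¹ = λ·Q. Then ‖qⁿ⁺¹‖² ≤ E₂, and consequently (1/2)(Lφⁿ⁺¹, φⁿ⁺¹) + ‖qⁿ⁺¹‖² ≤ (1/2)(Lφⁿ, φⁿ) + ‖qⁿ‖². -/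
open InnerProductSpace

theorem eop_ieq_energy_stable
    {H : Type*} [NormedAddCommGroup H] [InnerProductSpace ℝ H]
    (L : H →ₗ[ℝ] H) (hL : ∀ x y : H, ⟪L x, y⟫_ℝ = ⟪x, L y⟫_ℝ)
    (hLpos : ∀ x : H, 0 ≤ ⟪L x, x⟫_ℝ)
    (φn φn1 qn Q : H) (hQ : Q ≠ 0)
    (E1 E2 : ℝ)
    (hE1 : E1 = ‖Q‖ ^ 2)
    (hE2 : E2 = (1 / 2) * ⟪L φn, φn⟫_ℝ + ‖qn‖ ^ 2 - (1 / 2) * ⟪L φn1, φn1⟫_ℝ)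
    (hE2nn : 0 ≤ E2)
    (lam : ℝ) (hlam : lam = min 1 (Real.sqrt (E2 / E1)))
    (qn1 : H) (hqn1 : qn1 = lam • Q) :
    ‖qn1‖ ^ 2 ≤ E2 ∧
    (1 / 2) * ⟪L φn1, φn1⟫_ℝ + ‖qn1‖ ^ 2
      ≤ (1 / 2) * ⟪L φn, φn⟫_ℝ + ‖qn‖ ^ 2 := by
  have hE1pos : 0 < E1 := by
    rw [hE1]; exact pow_pos (norm_pos_iff.mpr hQ) 2
  have hnorm : ‖qn1‖ ^ 2 = lam ^ 2 * E1 := by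
    rw [hqn1, norm_smul, hE1, mul_pow]
    simp [sq_abs]
  have key : ‖qn1‖ ^ 2 ≤ E2 := by
    rw [hnorm]
    rcases le_total (Real.sqrt (E2 / E1)) 1 with h | h
    · have : lam = Real.sqrt (E2 / E1) := by rw [hlam, min_eq_right h]
      rw [this, Real.sq_sqrt (div_nonneg hE2nn hE1pos.le)]
      rw [div_mul_cancel₀ _ hE1pos.ne']
    · have hlam1 : lam = 1 := by rw [hlam, min_eq_left h]
      have : (1:ℝ) ≤ E2 / E1 := by
        nlinarith [Real.sq_sqrt (div_nonneg hE2nn hE1pos.le), Real.sqrt_nonneg (E2/E1)]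
      rw [hlam1, one_pow, one_mul]
      exact (one_le_div hE1pos).mp this
  exact ⟨key, by linarith [key, hE2.symm.le, hE2.le]⟩
end

section
/- Let H be a real inner product space and q̂, Q ∈ H with q̂ ≠ Q. Define a = ‖q̂ − Q‖², b = 2(q̂ − Q, Q), c₀ a real number, and suppose b ≤ 0, c₀ > 0, b² − 4ac₀ ≥ 0. Let ξ = (−b − √(b² − 4ac₀))/(2a) and set q = ξ·q̂ + (1 − ξ)·Q. Then ‖q‖² = ‖Q‖² − c₀. -/
open InnerProductSpace

theorem quadratic_eq_zero_of_eq_sub_sqrt_discrim {a b c x : ℝ} (ha : a ≠ 0)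
    (hd : 0 ≤ discrim a b c) (hx : x = (-b - √(discrim a b c)) / (2 * a)) :
    a * (x * x) + b * x + c = 0 :=
  (quadratic_eq_zero_iff ha (Real.mul_self_sqrt hd).symm x).2 (Or.inr hx)

theorem norm_smul_add_one_sub_smul_sq_real {H : Type*} [NormedAddCommGroup H] [InnerProductSpace ℝ H]
    (x y : H) (t : ℝ) :
    ‖t • x + (1 - t) • y‖ ^ 2 = ‖x - y‖ ^ 2 * (t * t) + 2 * ⟪x - y, y⟫_ℝ * t + ‖y‖ ^ 2 := by
  have hcomb : t • x + (1 - t) • y = t • (x - y) + y := by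
    rw [smul_sub, sub_smul, one_smul]; abel
  rw [hcomb, norm_add_sq_real, norm_smul, real_inner_smul_left, mul_pow, Real.norm_eq_abs,
    sq_abs]
  ring

theorem relaxed_update_norm_sq_general
    {H : Type*} [NormedAddCommGroup H] [InnerProductSpace ℝ H]
    (qhat Q : H) (hne : qhat ≠ Q)
    (a b c₀ : ℝ)
    (ha : a = ‖qhat - Q‖ ^ 2)
    (hb : b = 2 * ⟪qhat - Q, Q⟫_ℝ)
    (hdisc : 0 ≤ b ^ 2 - 4 * a * c₀)
    (ξ : ℝ) (hξ : ξ = (-b - Real.sqrt (b ^ 2 - 4 * a * c₀)) / (2 * a))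
    (q : H) (hq : q = ξ • qhat + (1 - ξ) • Q) :
    ‖q‖ ^ 2 = ‖Q‖ ^ 2 - c₀ := by
  have ha0 : a ≠ 0 := by
    rw [ha]
    exact pow_ne_zero 2 (norm_ne_zero_iff.2 (sub_ne_zero.2 hne))
  have hroot : a * (ξ * ξ) + b * ξ + c₀ = 0 :=
    quadratic_eq_zero_of_eq_sub_sqrt_discrim ha0 (by rwa [discrim]) (by rwa [discrim])
  rw [hq, norm_smul_add_one_sub_smul_sq_real, ← ha, ← hb]
  linear_combination hroot

theorem relaxed_update_norm_sq
    {H : Type*} [NormedAddCommGroup H] [InnerProductSpace ℝ H]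
    (qhat Q : H) (hne : qhat ≠ Q)
    (a b c₀ : ℝ)
    (ha : a = ‖qhat - Q‖ ^ 2)
    (hb : b = 2 * ⟪qhat - Q, Q⟫_ℝ)
    (hbn : b ≤ 0) (hc : 0 < c₀)
    (hdisc : 0 ≤ b ^ 2 - 4 * a * c₀)
    (ξ : ℝ) (hξ : ξ = (-b - Real.sqrt (b ^ 2 - 4 * a * c₀)) / (2 * a))
    (q : H) (hq : q = ξ • qhat + (1 - ξ) • Q) :
    ‖q‖ ^ 2 = ‖Q‖ ^ 2 - c₀ :=
  relaxed_update_norm_sq_general qhat Q hne a b c₀ ha hb hdisc ξ hξ q hq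
end

section
/- Let H be a real inner product space, L : H → H linear self-adjoint non-negative, and let φⁿ⁻¹, φⁿ, φⁿ⁺¹, qⁿ⁻¹, qⁿ ∈ H and Q ∈ H with Q − (2/5)qⁿ ≠ 0. Define Ē₁ = ‖Q − (2/5)qⁿ‖², Ē₂ = (1/10)(Lφⁿ, φⁿ) + (1/10)(L(2φⁿ − φⁿ⁻¹), 2φⁿ − φⁿ⁻¹) − (1/10)(Lφⁿ⁺¹, φⁿ⁺¹) − (1/10)(L(2φⁿ⁺¹ − φⁿ), 2φⁿ⁺¹ − φⁿ) + (4/25)‖qⁿ‖² + (1/5)‖2qⁿ − qⁿ⁻¹‖², assume Ē₂ ≥ 0, set λ = min{1, √(Ē₂/Ē₁)} and qⁿ⁺¹ = λ(Q − (2/5)qⁿ) + (2/5)qⁿ. Then ‖qⁿ⁺¹ − (2/5)qⁿ‖² ≤ Ē₂, and consequently (1/4)[(Lφⁿ⁺¹, φⁿ⁺¹) + (L(2φⁿ⁺¹ − φⁿ), 2φⁿ⁺¹ − φⁿ)] + (1/2)[‖qⁿ⁺¹‖² + ‖2qⁿ⁺¹ − qⁿ‖²] ≤ (1/4)[(Lφⁿ,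 φⁿ) + (L(2φⁿ − φⁿ⁻¹), 2φⁿ − φⁿ⁻¹)] + (1/2)[‖qⁿ‖² + ‖2qⁿ − qⁿ⁻¹‖²]. -/
open InnerProductSpace

theorem eop_ieq_bdf2_energy_stable
    {H : Type*} [NormedAddCommGroup H] [InnerProductSpace ℝ H]
    (L : H →ₗ[ℝ] H) (hL : ∀ x y : H, ⟪L x, y⟫_ℝ = ⟪x, L y⟫_ℝ)
    (hLpos : ∀ x : H, 0 ≤ ⟪L x, x⟫_ℝ)
    (φnm1 φn φn1 qnm1 qn Q : H)
    (hQ : Q - ((2 : ℝ) / 5) • qn ≠ 0)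
    (E1 E2 : ℝ)
    (hE1 : E1 = ‖Q - ((2 : ℝ) / 5) • qn‖ ^ 2)
    (hE2 : E2 = (1 / 10) * ⟪L φn, φn⟫_ℝ
        + (1 / 10) * ⟪L ((2 : ℝ) • φn - φnm1), (2 : ℝ) • φn - φnm1⟫_ℝ
        - (1 / 10) * ⟪L φn1, φn1⟫_ℝ
        - (1 / 10) * ⟪L ((2 : ℝ) • φn1 - φn), (2 : ℝ) • φn1 - φn⟫_ℝ
        + (4 / 25) * ‖qn‖ ^ 2 + (1 / 5) * ‖(2 : ℝ) • qn - qnm1‖ ^ 2)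
    (hE2nn : 0 ≤ E2)
    (lam : ℝ) (hlam : lam = min 1 (Real.sqrt (E2 / E1)))
    (qn1 : H) (hqn1 : qn1 = lam • (Q - ((2 : ℝ) / 5) • qn) + ((2 : ℝ) / 5) • qn) :
    ‖qn1 - ((2 : ℝ) / 5) • qn‖ ^ 2 ≤ E2 ∧
    (1 / 4) * (⟪L φn1, φn1⟫_ℝ + ⟪L ((2 : ℝ) • φn1 - φn), (2 : ℝ) • φn1 - φn⟫_ℝ)
      + (1 / 2) * (‖qn1‖ ^ 2 + ‖(2 : ℝ) • qn1 - qn‖ ^ 2)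
    ≤ (1 / 4) * (⟪L φn, φn⟫_ℝ + ⟪L ((2 : ℝ) • φn - φnm1), (2 : ℝ) • φn - φnm1⟫_ℝ)
      + (1 / 2) * (‖qn‖ ^ 2 + ‖(2 : ℝ) • qn - qnm1‖ ^ 2) := by

  have key : ∀ q p : H, ‖q‖^2 + ‖(2:ℝ)•q - p‖^2 = 5*‖q - ((2:ℝ)/5)•p‖^2 + (1/5)*‖p‖^2 := by
    intro q p
    have e1 : ‖(2:ℝ)•q - p‖^2 = 4*‖q‖^2 - 4*⟪q,p⟫_ℝ + ‖p‖^2 := by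
      rw [norm_sub_sq_real, real_inner_smul_left, norm_smul]
      simp; ring
    have e2 : ‖q - ((2:ℝ)/5)•p‖^2 = ‖q‖^2 - (4/5)*⟪q,p⟫_ℝ + (4/25)*‖p‖^2 := by
      rw [norm_sub_sq_real, real_inner_smul_right, norm_smul]
      simp; ring
    rw [e1, e2]; ring
  have hE1pos : 0 < E1 := by
    rw [hE1]
    exact pow_pos (norm_pos_iff.mpr hQ) 2
  have hlamnn : 0 ≤ lam := by
    rw [hlam]
    exact le_min zero_le_one (Real.sqrt_nonneg _)
  have hdiff : qn1 - ((2:ℝ)/5) • qn = lam • (Q - ((2:ℝ)/5) • qn) := by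
    rw [hqn1]; abel
  have hnorm : ‖qn1 - ((2:ℝ)/5) • qn‖^2 = lam^2 * E1 := by
    rw [hdiff, norm_smul, hE1, mul_pow, Real.norm_eq_abs, sq_abs]
  have hlamsq : lam^2 * E1 ≤ E2 := by
    have h1 : lam ≤ Real.sqrt (E2 / E1) := by rw [hlam]; exact min_le_right _ _
    have h2 : lam^2 ≤ E2 / E1 := by
      calc lam^2 ≤ (Real.sqrt (E2 / E1))^2 := by
            apply pow_le_pow_left₀ hlamnn h1
        _ = E2 / E1 := Real.sq_sqrt (by positivity)
    calc lam^2 * E1 ≤ (E2 / E1) * E1 := by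
          exact mul_le_mul_of_nonneg_right h2 hE1pos.le
      _ = E2 := by field_simp
  have hfirst : ‖qn1 - ((2:ℝ)/5) • qn‖^2 ≤ E2 := by rw [hnorm]; exact hlamsq
  refine ⟨hfirst, ?_⟩
  have k1 := key qn1 qn
  have k2 := key qn qnm1
  nlinarith [hfirst, k1, k2, hE2.symm]
end

section
/- Let H be a real inner product space, L : H → H linear self-adjoint non-negative, k ≥ 1, and Q₁, …, Q_k ∈ H not all zero. Given φⁿ, φⁿ⁺¹ ∈ H and q₁ⁿ, …, q_kⁿ ∈ H, set E₁ = Σᵢ‖Qᵢ‖², E₂ = (1/2)(Lφⁿ, φⁿ) + Σᵢ‖qᵢⁿ‖² − (1/2)(Lφⁿ⁺¹, φⁿ⁺¹), assume E₂ ≥ 0, define λ = min{1, √(E₂/E₁)} and qᵢⁿ⁺¹ = λQᵢ for each i. Then Σᵢ‖qᵢⁿ⁺¹‖² ≤ E₂ and hence (1/2)(Lφⁿ⁺¹, φⁿ⁺¹) + Σᵢ‖qᵢⁿ⁺¹‖² ≤ (1/2)(Lφⁿ, φⁿ) + Σᵢ‖qᵢⁿ‖². -/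
open InnerProductSpace

theorem eop_ieq_multi_energy_stable
    {H : Type*} [NormedAddCommGroup H] [InnerProductSpace ℝ H]
    (L : H →ₗ[ℝ] H) (hL : ∀ x y : H, ⟪L x, y⟫_ℝ = ⟪x, L y⟫_ℝ)
    (hLpos : ∀ x : H, 0 ≤ ⟪L x, x⟫_ℝ)
    (k : ℕ) (hk : 1 ≤ k)
    (Q : Fin k → H) (hQ : ∃ i, Q i ≠ 0)
    (φn φn1 : H) (q : Fin k → H)
    (E1 E2 : ℝ)
    (hE1 : E1 = ∑ i, ‖Q i‖ ^ 2)
    (hE2 : E2 = (1 / 2) * ⟪L φn, φn⟫_ℝ + (∑ i, ‖q i‖ ^ 2)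
        - (1 / 2) * ⟪L φn1, φn1⟫_ℝ)
    (hE2nn : 0 ≤ E2)
    (lam : ℝ) (hlam : lam = min 1 (Real.sqrt (E2 / E1)))
    (q1 : Fin k → H) (hq1 : ∀ i, q1 i = lam • Q i) :
    (∑ i, ‖q1 i‖ ^ 2) ≤ E2 ∧
    (1 / 2) * ⟪L φn1, φn1⟫_ℝ + (∑ i, ‖q1 i‖ ^ 2)
      ≤ (1 / 2) * ⟪L φn, φn⟫_ℝ + (∑ i, ‖q i‖ ^ 2) := by
  obtain ⟨i0, hi0⟩ := hQ
  have hE1pos : 0 < E1 := by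
    rw [hE1]
    apply Finset.sum_pos' (fun i _ => by positivity)
    exact ⟨i0, Finset.mem_univ i0, by have := norm_pos_iff.mpr hi0; positivity⟩
  have hlamnn : 0 ≤ lam := by
    rw [hlam]; exact le_min zero_le_one (Real.sqrt_nonneg _)
  have hsum : (∑ i, ‖q1 i‖ ^ 2) = lam ^ 2 * E1 := by
    rw [hE1, Finset.mul_sum]
    apply Finset.sum_congr rfl
    intro i _
    rw [hq1 i, norm_smul, mul_pow, Real.norm_eq_abs, sq_abs]
  have hlamsq : lam ^ 2 ≤ E2 / E1 := by
    have h1 : lam ≤ Real.sqrt (E2 / E1) := by rw [hlam]; exact min_le_right _ _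
    calc lam ^ 2 ≤ Real.sqrt (E2 / E1) ^ 2 := by
          exact pow_le_pow_left₀ hlamnn h1 2
      _ = E2 / E1 := Real.sq_sqrt (by positivity)
  have h1 : (∑ i, ‖q1 i‖ ^ 2) ≤ E2 := by
    rw [hsum]
    calc lam ^ 2 * E1 ≤ (E2 / E1) * E1 := by
          exact mul_le_mul_of_nonneg_right hlamsq hE1pos.le
      _ = E2 := div_mul_cancel₀ _ hE1pos.ne'
  exact ⟨h1, by linarith⟩
end
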